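/- arXiv:2310.20173 — 4 statements merged into one kernel-verified Lean document; each statement's English description precedes it below -/
import Mathlib

section
/- Suppose Δ := 4δ² − 8κ_r²μ₁²σ₂²δ/(μ₂σ₁²) > 0, and set d₁ = (2δ + √Δ)/(4ρσ₂²) and d₂ = (2δ − √Δ)/(4ρσ₂²). Then ξ(t) = d₁ d₂ (e^{√Δ(T−t)} − 1)/(d₁ e^{√Δ(T−t)} − d₂) satisfies the Riccati equation ξ'(t) + 2ρσ₂²ξ(t)² − 2δξ(t) + κ_r²μ₁²δ/(ρμ₂σ₁²) = 0 on [0,T] with ξ(T) = 0, and moreover ξ(t) > 0 for all t ∈ [0,T). -/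
/-!
Factoring the quadratic through its roots, the Riccati right-hand side is
`-a (ξ - d₁) (ξ - d₂)` with `a = 2ρσ₂²` and `a (d₁ - d₂) = √Δ`, and the given `ξ` is the classical
closed-form solution of `ξ' = -a (ξ - d₁) (ξ - d₂)` vanishing at `T`. Since the constant term of the quadratic is positive
and `δ > 0`, both roots are positive, so the denominator `d₁ e^{√Δ(T-t)} - d₂ ≥ d₁ - d₂` stays
positive for `t ≤ T` and `ξ` is positive before `T`.
-/

open Real

theorem quadratic_eq_mul_sub_mul_sub {K : Type*} [Field K] [NeZero (2 : K)] {a b c s r₁ r₂ : K}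
    (ha : a ≠ 0) (hs : discrim a b c = s * s) (hr₁ : r₁ = (-b + s) / (2 * a))
    (hr₂ : r₂ = (-b - s) / (2 * a)) (x : K) :
    a * (x * x) + b * x + c = a * (x - r₁) * (x - r₂) := by
  rw [discrim] at hs
  subst hr₁ hr₂
  field_simp
  linear_combination (-1) * hs

noncomputable def riccatiClosedForm (d₁ d₂ s T t : ℝ) : ℝ :=
  d₁ * d₂ * (exp (s * (T - t)) - 1) / (d₁ * exp (s * (T - t)) - d₂)

theorem riccatiClosedForm_self (d₁ d₂ s T : ℝ) : riccatiClosedForm d₁ d₂ s T T = 0 := by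
  simp [riccatiClosedForm]

theorem hasDerivAt_riccatiClosedForm {a d₁ d₂ s T t : ℝ} (hs : s = a * (d₁ - d₂))
    (hden : d₁ * exp (s * (T - t)) - d₂ ≠ 0) :
    HasDerivAt (riccatiClosedForm d₁ d₂ s T)
      (-a * (riccatiClosedForm d₁ d₂ s T t - d₁) * (riccatiClosedForm d₁ d₂ s T t - d₂)) t := by
  have hE : HasDerivAt (fun u => exp (s * (T - u))) (exp (s * (T - t)) * -s) t := by
    simpa using (((hasDerivAt_id t).const_sub T).const_mul s).exp
  refine (((hE.sub_const 1).const_mul (d₁ * d₂)).div ((hE.const_mul d₁).sub_const d₂)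
    hden).congr_deriv ?_
  unfold riccatiClosedForm
  generalize exp (s * (T - t)) = E at hden ⊢
  field_simp
  rw [hs]
  ring

theorem riccatiClosedForm_denom_pos {d₁ d₂ s T t : ℝ} (hd₁ : 0 < d₁) (hd : d₂ < d₁)
    (hs : 0 ≤ s) (ht : t ≤ T) : 0 < d₁ * exp (s * (T - t)) - d₂ := by
  have : 1 ≤ exp (s * (T - t)) := one_le_exp (mul_nonneg hs (sub_nonneg.2 ht))
  nlinarith

theorem riccatiClosedForm_pos {d₁ d₂ s T t : ℝ} (hd₂ : 0 < d₂) (hd : d₂ < d₁) (hs : 0 < s)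
    (ht : t < T) : 0 < riccatiClosedForm d₁ d₂ s T t := by
  have hE : 1 < exp (s * (T - t)) := one_lt_exp_iff.2 (mul_pos hs (sub_pos.2 ht))
  exact div_pos (mul_pos (mul_pos (hd₂.trans hd) hd₂) (sub_pos.2 hE))
    (riccatiClosedForm_denom_pos (hd₂.trans hd) hd hs.le ht.le)

theorem stmt_4_general (δ ρ σ₂ σ₁ μ₂ κr μ₁ T : ℝ) (hδ : 0 < δ) (hρ : 0 < ρ) (hσ₂ : 0 < σ₂)
    (hσ₁ : 0 < σ₁) (hμ₂ : 0 < μ₂) (hκμ : κr * μ₁ ≠ 0)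
    (Δ d₁ d₂ : ℝ)
    (hΔ : Δ = 4 * δ ^ 2 - 8 * κr ^ 2 * μ₁ ^ 2 * σ₂ ^ 2 * δ / (μ₂ * σ₁ ^ 2))
    (hΔpos : 0 < Δ)
    (hd₁ : d₁ = (2 * δ + Real.sqrt Δ) / (4 * ρ * σ₂ ^ 2))
    (hd₂ : d₂ = (2 * δ - Real.sqrt Δ) / (4 * ρ * σ₂ ^ 2))
    (ξ : ℝ → ℝ)
    (hξ : ξ = fun t => d₁ * d₂ * (Real.exp (Real.sqrt Δ * (T - t)) - 1) /
      (d₁ * Real.exp (Real.sqrt Δ * (T - t)) - d₂)) :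
    (∀ t ∈ Set.Icc (0 : ℝ) T,
      HasDerivAt ξ (2 * δ * ξ t - 2 * ρ * σ₂ ^ 2 * (ξ t) ^ 2
        - κr ^ 2 * μ₁ ^ 2 * δ / (ρ * μ₂ * σ₁ ^ 2)) t) ∧
    ξ T = 0 ∧
    (∀ t ∈ Set.Ico (0 : ℝ) T, 0 < ξ t) := by
  set s := √Δ
  set a := 2 * ρ * σ₂ ^ 2
  set c := κr ^ 2 * μ₁ ^ 2 * δ / (ρ * μ₂ * σ₁ ^ 2)
  change ξ = riccatiClosedForm d₁ d₂ s T at hξ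
  subst hξ
  have hs : 0 < s := sqrt_pos.2 hΔpos
  have ha : 0 < a := by positivity
  have hc : 0 < c := by simp only [c, ← mul_pow]; positivity
  have hdiscrim : discrim a (-2 * δ) c = s * s := by
    rw [mul_self_sqrt hΔpos.le, hΔ, discrim]; simp only [a, c]; field_simp; ring
  have hfactor := quadratic_eq_mul_sub_mul_sub (r₁ := d₁) (r₂ := d₂) ha.ne' hdiscrim
    (by rw [hd₁]; ring) (by rw [hd₂]; ring)
  have hs_lt : s < 2 * δ := by
    refine (mul_self_lt_mul_self_iff hs.le (by positivity)).2 ?_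
    rw [← hdiscrim, discrim]
    nlinarith [mul_pos ha hc]
  have hd₂pos : 0 < d₂ := by rw [hd₂]; exact div_pos (by linarith) (by positivity)
  have hsd : s = a * (d₁ - d₂) := by rw [hd₁, hd₂]; field_simp; ring
  have hd : d₂ < d₁ := by rw [hd₁, hd₂]; gcongr; linarith
  refine ⟨fun t ht => ?_, riccatiClosedForm_self ..,
    fun t ht => riccatiClosedForm_pos hd₂pos hd hs ht.2⟩
  convert hasDerivAt_riccatiClosedForm hsd
    (riccatiClosedForm_denom_pos (hd₂pos.trans hd) hd hs.le ht.2).ne' using 1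
  linear_combination (-1) * hfactor (riccatiClosedForm d₁ d₂ s T t)

/-- Δ > 0 case: ξ(t) = d₁d₂(e^{√Δ(T−t)}−1)/(d₁e^{√Δ(T−t)}−d₂) satisfies the Riccati equation
ξ' + 2ρσ₂²ξ² − 2δξ + κr²μ₁²δ/(ρμ₂σ₁²) = 0 on [0,T] with ξ(T)=0, and ξ(t) > 0 on [0,T). -/
theorem stmt_4 (δ ρ σ₂ σ₁ μ₂ κr μ₁ T : ℝ) (hδ : 0 < δ) (hρ : 0 < ρ) (hσ₂ : 0 < σ₂)
    (hσ₁ : 0 < σ₁) (hμ₂ : 0 < μ₂) (hκμ : κr * μ₁ ≠ 0) (hT : 0 < T)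
    (Δ d₁ d₂ : ℝ)
    (hΔ : Δ = 4 * δ ^ 2 - 8 * κr ^ 2 * μ₁ ^ 2 * σ₂ ^ 2 * δ / (μ₂ * σ₁ ^ 2))
    (hΔpos : 0 < Δ)
    (hd₁ : d₁ = (2 * δ + Real.sqrt Δ) / (4 * ρ * σ₂ ^ 2))
    (hd₂ : d₂ = (2 * δ - Real.sqrt Δ) / (4 * ρ * σ₂ ^ 2))
    (ξ : ℝ → ℝ)
    (hξ : ξ = fun t => d₁ * d₂ * (Real.exp (Real.sqrt Δ * (T - t)) - 1) /
      (d₁ * Real.exp (Real.sqrt Δ * (T - t)) - d₂)) :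
    (∀ t ∈ Set.Icc (0 : ℝ) T,
      HasDerivAt ξ (2 * δ * ξ t - 2 * ρ * σ₂ ^ 2 * (ξ t) ^ 2
        - κr ^ 2 * μ₁ ^ 2 * δ / (ρ * μ₂ * σ₁ ^ 2)) t) ∧
    ξ T = 0 ∧
    (∀ t ∈ Set.Ico (0 : ℝ) T, 0 < ξ t) :=
  stmt_4_general δ ρ σ₂ σ₁ μ₂ κr μ₁ T hδ hρ hσ₂ hσ₁ hμ₂ hκμ Δ d₁ d₂ hΔ hΔpos hd₁ hd₂ ξ hξ
end

section
/- Suppose Δ := 4δ² − 8κ_r²μ₁²σ₂²δ/(μ₂σ₁²) = 0 (equivalently δ = 2κ_r²μ₁²σ₂²/(μ₂σ₁²)). Then ξ(t) = (κ_r²μ₁²/σ₁²) · (T−t)/(ρμ₂(T−t) + ρμ₂/δ) satisfies the Riccati equation ξ'(t) + 2ρσ₂²ξ(t)² − 2δξ(t) + κ_r²μ₁²δ/(ρμ₂σ₁²) = 0 on [0,T] with terminal condition ξ(T) = 0. -/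
/-! With `q = 2ρσ₂²` and `K = κr²μ₁²δ/(ρμ₂σ₁²)`, the condition `Δ = 0` says `qK = δ²`, so the
Riccati right-hand side `2δξ − qξ² − K` is the perfect square `−(K − δξ)²/K`. Writing `s = T − t`,
the given `ξ` is `Ks/(1 + δs)`, for which `K − δξ = K/(1 + δs)`; hence both sides of the equation
equal `−K/(1 + δs)²`. -/

theorem hasDerivAt_riccati_of_mul_eq_sq {K δ q T t : ℝ} (hqK : q * K = δ ^ 2)
    (ht : 1 + δ * (T - t) ≠ 0) :
    HasDerivAt (fun t => K * (T - t) / (1 + δ * (T - t)))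
      (2 * δ * (K * (T - t) / (1 + δ * (T - t)))
        - q * (K * (T - t) / (1 + δ * (T - t))) ^ 2 - K) t := by
  have hnum : HasDerivAt (fun t => K * (T - t)) (-K) t := by
    simpa using ((hasDerivAt_id t).const_sub T).const_mul K
  have hden : HasDerivAt (fun t => 1 + δ * (T - t)) (-δ) t := by
    simpa using (((hasDerivAt_id t).const_sub T).const_mul δ).const_add 1
  refine (hnum.div hden ht).congr_deriv ?_
  field_simp
  linear_combination (T - t) ^ 2 * K * hqK

theorem mul_div_mul_add_div_eq {c a δ s : ℝ} (hδ : δ ≠ 0) :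
    c * s / (a * s + a / δ) = c * δ / a * s / (1 + δ * s) := by
  rw [show a * s + a / δ = a / δ * (1 + δ * s) by field_simp; ring, ← div_div, div_div_eq_mul_div]
  ring

theorem stmt_5_general (δ ρ σ₂ σ₁ μ₂ κr μ₁ T : ℝ) (hδ : 0 < δ) (hρ : 0 < ρ)
    (hΔ0 : δ = 2 * κr ^ 2 * μ₁ ^ 2 * σ₂ ^ 2 / (μ₂ * σ₁ ^ 2))
    (ξ : ℝ → ℝ)
    (hξ : ξ = fun t => (κr ^ 2 * μ₁ ^ 2 / σ₁ ^ 2) * (T - t) / (ρ * μ₂ * (T - t) + ρ * μ₂ / δ)) :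
    (∀ t ∈ Set.Icc (0 : ℝ) T,
      HasDerivAt ξ (2 * δ * ξ t - 2 * ρ * σ₂ ^ 2 * (ξ t) ^ 2
        - κr ^ 2 * μ₁ ^ 2 * δ / (ρ * μ₂ * σ₁ ^ 2)) t) ∧
    ξ T = 0 := by
  set K := κr ^ 2 * μ₁ ^ 2 * δ / (ρ * μ₂ * σ₁ ^ 2)
  have hξK : ξ = fun t => K * (T - t) / (1 + δ * (T - t)) := by
    rw [hξ]
    funext t
    rw [mul_div_mul_add_div_eq hδ.ne']
    ring
  have hqK : 2 * ρ * σ₂ ^ 2 * K = δ ^ 2 :=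
    calc 2 * ρ * σ₂ ^ 2 * K = δ * (2 * κr ^ 2 * μ₁ ^ 2 * σ₂ ^ 2 / (μ₂ * σ₁ ^ 2)) := by
          simp only [K]
          field_simp
      _ = δ ^ 2 := by rw [← hΔ0, sq]
  refine ⟨fun t ht => ?_, by simp [hξ]⟩
  rw [hξK]
  exact hasDerivAt_riccati_of_mul_eq_sq hqK (by nlinarith [ht.2])

/-- Δ = 0 case: ξ(t) = (κr²μ₁²/σ₁²)(T−t)/(ρμ₂(T−t)+ρμ₂/δ) satisfies the Riccati equation
ξ' + 2ρσ₂²ξ² − 2δξ + κr²μ₁²δ/(ρμ₂σ₁²) = 0 on [0,T] with ξ(T) = 0. -/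
theorem stmt_5 (δ ρ σ₂ σ₁ μ₂ κr μ₁ T : ℝ) (hδ : 0 < δ) (hρ : 0 < ρ) (hσ₂ : 0 < σ₂)
    (hσ₁ : 0 < σ₁) (hμ₂ : 0 < μ₂) (hT : 0 < T)
    (hΔ0 : δ = 2 * κr ^ 2 * μ₁ ^ 2 * σ₂ ^ 2 / (μ₂ * σ₁ ^ 2))
    (ξ : ℝ → ℝ)
    (hξ : ξ = fun t => (κr ^ 2 * μ₁ ^ 2 / σ₁ ^ 2) * (T - t) / (ρ * μ₂ * (T - t) + ρ * μ₂ / δ)) :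
    (∀ t ∈ Set.Icc (0 : ℝ) T,
      HasDerivAt ξ (2 * δ * ξ t - 2 * ρ * σ₂ ^ 2 * (ξ t) ^ 2
        - κr ^ 2 * μ₁ ^ 2 * δ / (ρ * μ₂ * σ₁ ^ 2)) t) ∧
    ξ T = 0 :=
  stmt_5_general δ ρ σ₂ σ₁ μ₂ κr μ₁ T hδ hρ hΔ0 ξ hξ
end

section
/- Suppose Δ = 0, i.e. δ = 2κ_r²μ₁²σ₂²/(μ₂σ₁²), and let ξ(t) = (κ_r²μ₁²/σ₁²)·(T−t)/(ρμ₂(T−t)+ρμ₂/δ). Then the function η(t) = ((2ι_r + 1)δκ_r²μ₁²/σ₁²) · (T−t)²/(δ(T−t)+1) is the unique solution on [0,T] of the linear ODE η'(t) − (δ − 2ρσ₂²ξ(t)) η(t) + 2ρμ₂(2ι_r+1)ξ(t) = 0 with η(T) = 0. -/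
/-!
Under `δ μ₂ σ₁² = 2 κ_r² μ₁² σ₂²` the coefficient of the ODE collapses to
`δ - 2ρσ₂² ξ(t) = δ / (δ (T - t) + 1)`, and the forcing term to `2 B (T - t) / (δ (T - t) + 1)`,
where `B` is the leading constant of `η`. Differentiating `η` then verifies the equation.
For uniqueness, `δ (T - t) + 1` is an integrating factor of the homogeneous equation, so the
difference of two solutions times it is constant on `[t, T]`, and it vanishes at `T`.
-/

open Set

theorem eq_of_hasDerivAt_linear {a b f g φ : ℝ → ℝ} {t T : ℝ} (htT : t ≤ T)
    (hf : ∀ u ∈ Icc t T, HasDerivAt f (a u * f u - b u) u)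
    (hg : ∀ u ∈ Icc t T, HasDerivAt g (a u * g u - b u) u)
    (hφ : ∀ u ∈ Icc t T, HasDerivAt φ (-(a u * φ u)) u) (hφt : φ t ≠ 0) (hfgT : f T = g T) :
    f t = g t := by
  set h : ℝ → ℝ := fun u => (f u - g u) * φ u
  have hh : ∀ u ∈ Icc t T, HasDerivAt h 0 u := fun u hu =>
    (((hf u hu).sub (hg u hu)).mul (hφ u hu)).congr_deriv (by simp only [Pi.sub_apply]; ring)
  have hconst := constant_of_has_deriv_right_zero
    (fun u hu => (hh u hu).continuousAt.continuousWithinAt)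
    (fun u hu => (hh u (Ico_subset_Icc_self hu)).hasDerivWithinAt)
  have hht : h t = 0 := by
    rw [← hconst T (right_mem_Icc.2 htT)]
    simp [h, hfgT]
  exact sub_eq_zero.1 ((mul_eq_zero.1 hht).resolve_right hφt)

section Coefficients

variable {δ ρ σ₂ σ₁ μ₂ κr μ₁ s : ℝ}

theorem rho_mu_add_pos (hδ : 0 < δ) (hρ : 0 < ρ) (hμ₂ : 0 < μ₂) (hs : 0 ≤ s) :
    0 < ρ * μ₂ * s + ρ * μ₂ / δ := by
  have : 0 < ρ * μ₂ := mul_pos hρ hμ₂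
  positivity

theorem coeff_eq_of_delta_eq (hδ : 0 < δ) (hρ : 0 < ρ) (hμ₂ : 0 < μ₂) (hσ₁ : σ₁ ≠ 0)
    (hΔ0 : δ = 2 * κr ^ 2 * μ₁ ^ 2 * σ₂ ^ 2 / (μ₂ * σ₁ ^ 2)) (hs : 0 ≤ s) :
    δ - 2 * ρ * σ₂ ^ 2 * ((κr ^ 2 * μ₁ ^ 2 / σ₁ ^ 2) * s / (ρ * μ₂ * s + ρ * μ₂ / δ)) =
      δ / (δ * s + 1) := by
  have hE := (rho_mu_add_pos hδ hρ hμ₂ hs).ne'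
  have hD : δ * s + 1 ≠ 0 := by positivity
  have key : δ * (μ₂ * σ₁ ^ 2) = 2 * κr ^ 2 * μ₁ ^ 2 * σ₂ ^ 2 := by
    rw [hΔ0]; field_simp
  field_simp
  linear_combination s * key

theorem forcing_eq (hδ : 0 < δ) (hρ : 0 < ρ) (hμ₂ : 0 < μ₂) (hσ₁ : σ₁ ≠ 0) (ιr : ℝ)
    (hs : 0 ≤ s) :
    2 * ρ * μ₂ * (2 * ιr + 1) * ((κr ^ 2 * μ₁ ^ 2 / σ₁ ^ 2) * s / (ρ * μ₂ * s + ρ * μ₂ / δ)) =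
      2 * ((2 * ιr + 1) * δ * κr ^ 2 * μ₁ ^ 2 / σ₁ ^ 2) * s / (δ * s + 1) := by
  have hE := (rho_mu_add_pos hδ hρ hμ₂ hs).ne'
  have hD : δ * s + 1 ≠ 0 := by positivity
  field_simp

end Coefficients

theorem hasDerivAt_mul_sq_div {B δ T t : ℝ} (hD : δ * (T - t) + 1 ≠ 0) :
    HasDerivAt (fun u => B * (T - u) ^ 2 / (δ * (T - u) + 1))
      (δ / (δ * (T - t) + 1) * (B * (T - t) ^ 2 / (δ * (T - t) + 1)) -
        2 * B * (T - t) / (δ * (T - t) + 1)) t := by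
  have hsub : HasDerivAt (fun u : ℝ => T - u) (-1) t := by
    simpa using (hasDerivAt_id t).const_sub T
  refine (((hsub.pow 2).const_mul B).div ((hsub.const_mul δ).add_const 1) hD).congr_deriv ?_
  simp only [Pi.pow_apply]
  field_simp
  ring

theorem stmt_6_general (δ ρ σ₂ σ₁ μ₂ κr μ₁ ιr T : ℝ) (hδ : 0 < δ) (hρ : 0 < ρ)
    (hσ₁ : 0 < σ₁) (hμ₂ : 0 < μ₂)
    (hΔ0 : δ = 2 * κr ^ 2 * μ₁ ^ 2 * σ₂ ^ 2 / (μ₂ * σ₁ ^ 2))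
    (ξ η : ℝ → ℝ)
    (hξ : ξ = fun t => (κr ^ 2 * μ₁ ^ 2 / σ₁ ^ 2) * (T - t) / (ρ * μ₂ * (T - t) + ρ * μ₂ / δ))
    (hη : η = fun t => ((2 * ιr + 1) * δ * κr ^ 2 * μ₁ ^ 2 / σ₁ ^ 2) *
      (T - t) ^ 2 / (δ * (T - t) + 1)) :
    (∀ t ∈ Set.Icc (0 : ℝ) T,
      HasDerivAt η ((δ - 2 * ρ * σ₂ ^ 2 * ξ t) * η t - 2 * ρ * μ₂ * (2 * ιr + 1) * ξ t) t) ∧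
    η T = 0 ∧
    (∀ f : ℝ → ℝ,
      (∀ t ∈ Set.Icc (0 : ℝ) T,
        HasDerivAt f ((δ - 2 * ρ * σ₂ ^ 2 * ξ t) * f t - 2 * ρ * μ₂ * (2 * ιr + 1) * ξ t) t) →
      f T = 0 → ∀ t ∈ Set.Icc (0 : ℝ) T, f t = η t) := by
  have hD : ∀ t ≤ T, 0 < δ * (T - t) + 1 := fun t ht => by
    have : 0 ≤ T - t := sub_nonneg.2 ht
    positivity
  have hcoeff : ∀ t ≤ T, δ - 2 * ρ * σ₂ ^ 2 * ξ t = δ / (δ * (T - t) + 1) := fun t ht => by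
    rw [hξ]
    exact coeff_eq_of_delta_eq hδ hρ hμ₂ hσ₁.ne' hΔ0 (sub_nonneg.2 ht)
  have hsol : ∀ t ≤ T,
      HasDerivAt η ((δ - 2 * ρ * σ₂ ^ 2 * ξ t) * η t - 2 * ρ * μ₂ * (2 * ιr + 1) * ξ t) t := by
    intro t ht
    rw [hcoeff t ht, hξ, hη, forcing_eq hδ hρ hμ₂ hσ₁.ne' ιr (sub_nonneg.2 ht)]
    exact hasDerivAt_mul_sq_div (hD t ht).ne'
  refine ⟨fun t ht => hsol t ht.2, by simp [hη], fun f hf hfT t ht => ?_⟩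
  refine eq_of_hasDerivAt_linear (φ := fun u => δ * (T - u) + 1) ht.2
    (fun u hu => hf u ⟨ht.1.trans hu.1, hu.2⟩) (fun u hu => hsol u hu.2) (fun u hu => ?_)
    (hD t ht.2).ne' (by simp [hfT, hη])
  rw [hcoeff u hu.2, div_mul_cancel₀ _ (hD u hu.2).ne']
  simpa using ((hasDerivAt_id u).const_sub T).const_mul δ |>.add_const 1

/-- Δ = 0 case: η(t) = ((2ι_r+1)δκr²μ₁²/σ₁²)(T−t)²/(δ(T−t)+1) is the unique solution on [0,T]
of η'(t) − (δ − 2ρσ₂²ξ(t))η(t) + 2ρμ₂(2ι_r+1)ξ(t) = 0 with η(T) = 0. -/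
theorem stmt_6 (δ ρ σ₂ σ₁ μ₂ κr μ₁ ιr T : ℝ) (hδ : 0 < δ) (hρ : 0 < ρ) (hσ₂ : 0 < σ₂)
    (hσ₁ : 0 < σ₁) (hμ₂ : 0 < μ₂) (hT : 0 < T)
    (hΔ0 : δ = 2 * κr ^ 2 * μ₁ ^ 2 * σ₂ ^ 2 / (μ₂ * σ₁ ^ 2))
    (ξ η : ℝ → ℝ)
    (hξ : ξ = fun t => (κr ^ 2 * μ₁ ^ 2 / σ₁ ^ 2) * (T - t) / (ρ * μ₂ * (T - t) + ρ * μ₂ / δ))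
    (hη : η = fun t => ((2 * ιr + 1) * δ * κr ^ 2 * μ₁ ^ 2 / σ₁ ^ 2) *
      (T - t) ^ 2 / (δ * (T - t) + 1)) :
    (∀ t ∈ Set.Icc (0 : ℝ) T,
      HasDerivAt η ((δ - 2 * ρ * σ₂ ^ 2 * ξ t) * η t - 2 * ρ * μ₂ * (2 * ιr + 1) * ξ t) t) ∧
    η T = 0 ∧
    (∀ f : ℝ → ℝ,
      (∀ t ∈ Set.Icc (0 : ℝ) T,
        HasDerivAt f ((δ - 2 * ρ * σ₂ ^ 2 * ξ t) * f t - 2 * ρ * μ₂ * (2 * ιr + 1) * ξ t) t) →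
      f T = 0 → ∀ t ∈ Set.Icc (0 : ℝ) T, f t = η t) :=
  stmt_6_general δ ρ σ₂ σ₁ μ₂ κr μ₁ ιr T hδ hρ hσ₁ hμ₂ hΔ0 ξ η hξ hη
end

section
/- The function L(s,λ) = (e^{−δ(t−s)}λ + (ρμ₂/δ)(1 − e^{−δ(t−s)}))² + (ρσ₂²/(2δ))(1 − e^{−2δ(t−s)}) solves the backward equation ∂_s L − δλ ∂_λ L + ρ∫_{(0,∞)} (L(s,λ+z) − L(s,λ)) F₂(dz) = 0 for s ≤ t, with terminal condition L(t,λ) = λ². -/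
/-!
Write `E = e^{-δ(t-s)}`, so that `e^{-2δ(t-s)} = E²` and `∂ₛE = δE`. Then `L(s, ·)` is the
quadratic `λ ↦ (Eλ + c(1-E))² + d(1-E²)` with `c = ρμ₂/δ`, `d = ρσ₂²/(2δ)`; its jump increment
`L(s,λ+z) - L(s,λ)` is a polynomial in `z` of degree two, whose `F₂`-integral involves only `μ₂`
and `σ₂²`. The constants `c` and `d` are exactly those for which the drift terms cancel it.
-/

open MeasureTheory Real

lemma hasDerivAt_exp_neg_mul_sub (κ t s : ℝ) :
    HasDerivAt (fun u => exp (-κ * (t - u))) (κ * exp (-κ * (t - s))) s := by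
  have h := (((hasDerivAt_id' s).const_sub t).const_mul (-κ)).exp
  exact h.congr_deriv (by ring)

lemma exp_neg_two_mul_mul (δ x : ℝ) : exp (-2 * δ * x) = exp (-δ * x) ^ 2 := by
  rw [← exp_nat_mul]
  ring_nf

lemma hasDerivAt_sq_affine_add_const (a b k y : ℝ) :
    HasDerivAt (fun x => (a * x + b) ^ 2 + k) (2 * a * (a * y + b)) y := by
  have h := ((((hasDerivAt_id' y).const_mul a).add_const b).pow 2).add_const k
  exact h.congr_deriv (by push_cast; ring)

lemma integral_sq_affine_add_sub (F : Measure ℝ) (hint1 : Integrable (fun z => z) F)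
    (hint2 : Integrable (fun z => z ^ 2) F) (a b k x : ℝ) :
    ∫ z, ((a * (x + z) + b) ^ 2 + k - ((a * x + b) ^ 2 + k)) ∂F
      = 2 * a * (a * x + b) * ∫ z, z ∂F + a ^ 2 * ∫ z, z ^ 2 ∂F := by
  have hexpand : ∀ z, (a * (x + z) + b) ^ 2 + k - ((a * x + b) ^ 2 + k)
      = 2 * a * (a * x + b) * z + a ^ 2 * z ^ 2 := fun z => by ring
  simp_rw [hexpand]
  rw [integral_add (hint1.const_mul _) (hint2.const_mul _), integral_const_mul,
    integral_const_mul]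

lemma hasDerivAt_sq_exp_affine_add (δ t c d x s : ℝ) :
    HasDerivAt
      (fun u => (exp (-δ * (t - u)) * x + c * (1 - exp (-δ * (t - u)))) ^ 2
        + d * (1 - exp (-δ * (t - u)) ^ 2))
      (2 * δ * exp (-δ * (t - s)) *
        ((exp (-δ * (t - s)) * x + c * (1 - exp (-δ * (t - s)))) * (x - c)
          - d * exp (-δ * (t - s)))) s := by
  have hE := hasDerivAt_exp_neg_mul_sub δ t s
  have hA := (hE.mul_const x).add ((hE.const_sub 1).const_mul c)
  have h := (hA.pow 2).add (((hE.pow 2).const_sub 1).const_mul d)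
  exact h.congr_deriv (by simp only [Pi.add_apply]; push_cast; ring)

theorem stmt_12_general (δ ρ t : ℝ) (hδ : 0 < δ)
    (F₂ : Measure ℝ)
    (hint1 : Integrable (fun z => z) F₂) (hint2 : Integrable (fun z => z ^ 2) F₂)
    (μ₂ σ₂sq : ℝ) (hμ₂ : μ₂ = ∫ z, z ∂F₂) (hσ₂ : σ₂sq = ∫ z, z ^ 2 ∂F₂)
    (L : ℝ → ℝ → ℝ)
    (hL : L = fun s lam =>
      (Real.exp (-δ * (t - s)) * lam + (ρ * μ₂ / δ) * (1 - Real.exp (-δ * (t - s)))) ^ 2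
        + (ρ * σ₂sq / (2 * δ)) * (1 - Real.exp (-2 * δ * (t - s)))) :
    (∀ lam : ℝ, L t lam = lam ^ 2) ∧
    (∀ s lam : ℝ, s ≤ t → ∃ Ls Llam : ℝ,
      HasDerivAt (fun u => L u lam) Ls s ∧
      HasDerivAt (fun y => L s y) Llam lam ∧
      Ls - δ * lam * Llam + ρ * ∫ z, (L s (lam + z) - L s lam) ∂F₂ = 0) := by
  simp_rw [hL, exp_neg_two_mul_mul]
  refine ⟨fun lam => by simp, fun s lam _ => ?_⟩
  refine ⟨_, _, hasDerivAt_sq_exp_affine_add δ t _ _ lam s,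
    hasDerivAt_sq_affine_add_const (exp (-δ * (t - s))) _ _ lam, ?_⟩
  rw [integral_sq_affine_add_sub F₂ hint1 hint2, ← hμ₂, ← hσ₂]
  generalize exp (-δ * (t - s)) = E
  field_simp
  ring

/-- L(s,λ) = (e^{−δ(t−s)}λ + (ρμ₂/δ)(1−e^{−δ(t−s)}))² + (ρσ₂²/(2δ))(1−e^{−2δ(t−s)})
solves ∂ₛL − δλ∂_λL + ρ∫(L(s,λ+z) − L(s,λ))F₂(dz) = 0 for s ≤ t, with L(t,λ) = λ². -/
theorem stmt_12 (δ ρ t : ℝ) (hδ : 0 < δ) (hρ : 0 < ρ) (ht : 0 < t)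
    (F₂ : Measure ℝ) [IsProbabilityMeasure F₂] (hsupp : F₂ (Set.Iic 0) = 0)
    (hint1 : Integrable (fun z => z) F₂) (hint2 : Integrable (fun z => z ^ 2) F₂)
    (μ₂ σ₂sq : ℝ) (hμ₂ : μ₂ = ∫ z, z ∂F₂) (hσ₂ : σ₂sq = ∫ z, z ^ 2 ∂F₂)
    (L : ℝ → ℝ → ℝ)
    (hL : L = fun s lam =>
      (Real.exp (-δ * (t - s)) * lam + (ρ * μ₂ / δ) * (1 - Real.exp (-δ * (t - s)))) ^ 2
        + (ρ * σ₂sq / (2 * δ)) * (1 - Real.exp (-2 * δ * (t - s)))) :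
    (∀ lam : ℝ, L t lam = lam ^ 2) ∧
    (∀ s lam : ℝ, s ≤ t → ∃ Ls Llam : ℝ,
      HasDerivAt (fun u => L u lam) Ls s ∧
      HasDerivAt (fun y => L s y) Llam lam ∧
      Ls - δ * lam * Llam + ρ * ∫ z, (L s (lam + z) - L s lam) ∂F₂ = 0) :=
  stmt_12_general δ ρ t hδ F₂ hint1 hint2 μ₂ σ₂sq hμ₂ hσ₂ L hL
end
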